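/- Let n ≥ 4 and let G be the graph Sₙ⁺ on n vertices obtained from the star Sₙ by adding one edge between two pendant vertices. Then for every integer k with 3 ≤ k ≤ n, the sum of the k largest signless Laplacian eigenvalues of G is strictly less than 1 plus the sum of the k largest vertex degrees of G, i.e., q₁(G) + … + q_k(G) < 1 + d₁(G) + … + d_k(G). -/

import Mathlib

open Matrix

/-- The signless Laplacian matrix `Q(G) = D + A` of a simple graph, over `ℝ`. -/
def sLapMatrix {m : ℕ} (G : SimpleGraph (Fin m)) [DecidableRel G.Adj] :
    Matrix (Fin m) (Fin m) ℝ :=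
  G.degMatrix ℝ + G.adjMatrix ℝ

/-- `q` lists the eigenvalues of `A` (with multiplicity) in non-increasing order. -/
def IsEigSeq {m : ℕ} (A : Matrix (Fin m) (Fin m) ℝ) (q : Fin m → ℝ) : Prop :=
  Antitone q ∧ ∃ (hA : A.IsHermitian) (σ : Equiv.Perm (Fin m)),
    ∀ i, q i = hA.eigenvalues (σ i)

/-- `d` lists the degrees of `G` (with multiplicity) in non-increasing order. -/
def IsDegSeq {m : ℕ} (G : SimpleGraph (Fin m)) [DecidableRel G.Adj] (d : Fin m → ℕ) : Prop :=
  Antitone d ∧ ∃ σ : Equiv.Perm (Fin m), ∀ i, d i = G.degree (σ i)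

/-- `Sₙ⁺`: the star on `n` vertices with center `0`, plus the extra edge `{1, 2}`. -/
def starPlus (n : ℕ) : SimpleGraph (Fin n) where
  Adj a b := a ≠ b ∧ (a.val = 0 ∨ b.val = 0 ∨ (a.val ≤ 2 ∧ b.val ≤ 2))
  symm := by constructor; intro a b h; exact ⟨h.1.symm, by tauto⟩
  loopless := by constructor; intro a h; exact h.1 rfl

instance starPlus.adjDecidable (n : ℕ) : DecidableRel (starPlus n).Adj := fun a b =>
  inferInstanceAs (Decidable (a ≠ b ∧ (a.val = 0 ∨ b.val = 0 ∨ (a.val ≤ 2 ∧ b.val ≤ 2))))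

/-!
The eigenvalues and the degrees both sum to `trace Q = ∑ deg`, so it suffices to compare the
tails past position `k`. Only the centre and the two ends of the extra edge have degree `≥ 2`, so
every degree in the tail is `1`. On the spectral side, `Q` is positive definite because of the
triangle `0 1 2`, and since the centre is adjacent to every vertex the form `xᵀ Q x` dominates
`‖x‖²` on the hyperplane `x₀ = 0`; as a hyperplane meets every plane spanned by two eigenvectors,
at most one eigenvalue lies below `1`. Hence the `n - k` smallest eigenvalues sum to more than
`n - k - 1`.
-/

open Finset

theorem card_sub_one_lt_sum {ι : Type*} [DecidableEq ι] (s : Finset ι) {f : ι → ℝ}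
    (hpos : ∀ i ∈ s, 0 < f i) (huniq : ∀ i ∈ s, ∀ j ∈ s, f i < 1 → f j < 1 → i = j) :
    (#s : ℝ) - 1 < ∑ i ∈ s, f i := by
  by_cases hsmall : ∃ i ∈ s, f i < 1
  · obtain ⟨i, hi, hfi⟩ := hsmall
    have hrest : ∀ j ∈ s.erase i, 1 ≤ f j := fun j hj => by
      by_contra! hfj
      exact (mem_erase.1 hj).1 (huniq j (mem_of_mem_erase hj) i hi hfj hfi)
    have := card_nsmul_le_sum _ _ _ hrest
    rw [nsmul_one, card_erase_of_mem hi, Nat.cast_pred (card_pos.2 ⟨i, hi⟩)] at this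
    rw [← add_sum_erase s f hi]
    linarith [hpos i hi]
  · push Not at hsmall
    have := card_nsmul_le_sum _ _ _ hsmall
    rw [nsmul_one] at this
    linarith

namespace Matrix.IsHermitian

variable {ι : Type*} [Fintype ι] [DecidableEq ι] {A : Matrix ι ι ℝ} (hA : A.IsHermitian)

theorem dotProduct_eigenvectorBasis (i j : ι) :
    ⇑(hA.eigenvectorBasis i) ⬝ᵥ ⇑(hA.eigenvectorBasis j) = if i = j then 1 else 0 := by
  have := hA.eigenvectorBasis.orthonormal
  rw [orthonormal_iff_ite] at this
  rw [dotProduct_comm]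
  simpa [EuclideanSpace.inner_eq_star_dotProduct] using this i j

theorem eq_of_eigenvalues_lt {c : ℝ} (v : ι)
    (hform : ∀ x : ι → ℝ, x v = 0 → c * (x ⬝ᵥ x) ≤ x ⬝ᵥ (A *ᵥ x)) {i j : ι}
    (hi : hA.eigenvalues i < c) (hj : hA.eigenvalues j < c) : i = j := by
  by_contra hij
  have he := hA.dotProduct_eigenvectorBasis
  have hAe := hA.mulVec_eigenvectorBasis
  let e (k : ι) : ι → ℝ := hA.eigenvectorBasis k
  have h₂ := hform (e j v • e i - e i v • e j) (by
    simp only [Pi.sub_apply, Pi.smul_apply, smul_eq_mul]; ring)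
  simp only [e, mulVec_sub, mulVec_smul, hAe, dotProduct_sub, sub_dotProduct, dotProduct_smul,
    smul_dotProduct, he, if_neg hij, if_neg (Ne.symm hij), if_pos, smul_eq_mul] at h₂
  have hb : e i v ^ 2 ≤ 0 := by
    nlinarith [mul_nonneg (sub_nonneg.2 hi.le) (sq_nonneg (e j v)), sub_pos.2 hj]
  have h₁ := hform (e i) (pow_eq_zero_iff two_ne_zero |>.1 (le_antisymm hb (sq_nonneg _)))
  simp only [e, hAe, dotProduct_smul, he, if_pos, smul_eq_mul] at h₁
  linarith

end Matrix.IsHermitian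

namespace SimpleGraph

variable {m : ℕ} (G : SimpleGraph (Fin m)) [DecidableRel G.Adj]

theorem isHermitian_sLapMatrix : (sLapMatrix G).IsHermitian :=
  (G.isHermitian_degMatrix (R := ℝ)).add (G.isHermitian_adjMatrix ℝ)

theorem trace_sLapMatrix : (sLapMatrix G).trace = ∑ v, (G.degree v : ℝ) := by
  simp [sLapMatrix, degMatrix]

theorem dotProduct_sLapMatrix_mulVec (x : Fin m → ℝ) :
    x ⬝ᵥ (sLapMatrix G *ᵥ x) = (∑ i, ∑ j, if G.Adj i j then (x i + x j) ^ 2 else 0) / 2 := by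
  simp_rw [sLapMatrix, add_mulVec, dotProduct_add, dotProduct_mulVec_degMatrix,
    dotProduct_mulVec_adjMatrix, ← sum_add_distrib, degree_eq_sum_if_adj, sum_mul, ite_mul,
    one_mul, zero_mul, ← sum_add_distrib, ite_add_ite, add_zero]
  rw [← add_self_div_two (∑ x_1 : Fin m, ∑ x_2 : Fin m, _)]
  conv_lhs => enter [1, 2, 2, i, 2, j]; rw [if_congr (G.adj_comm i j) rfl rfl]
  conv_lhs => enter [1, 2]; rw [Finset.sum_comm]
  simp_rw [← sum_add_distrib, ite_add_ite]
  congr 2 with i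
  congr 2 with j
  ring_nf

theorem dotProduct_sLapMatrix_mulVec_eq_zero_iff (x : Fin m → ℝ) :
    x ⬝ᵥ (sLapMatrix G *ᵥ x) = 0 ↔ ∀ i j, G.Adj i j → x i + x j = 0 := by
  simp (disch := intros; positivity)
    [dotProduct_sLapMatrix_mulVec, sum_eq_zero_iff_of_nonneg]

theorem posDef_sLapMatrix (h : ∀ x : Fin m → ℝ, (∀ i j, G.Adj i j → x i + x j = 0) → x = 0) :
    (sLapMatrix G).PosDef := by
  refine .of_dotProduct_mulVec_pos G.isHermitian_sLapMatrix fun x hx => ?_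
  rw [star_trivial]
  refine lt_of_le_of_ne ?_ fun h0 =>
    hx <| h x <| (G.dotProduct_sLapMatrix_mulVec_eq_zero_iff x).1 h0.symm
  rw [dotProduct_sLapMatrix_mulVec]
  positivity

theorem dotProduct_self_le_dotProduct_sLapMatrix_mulVec {c : Fin m} (hc : ∀ v, v ≠ c → G.Adj c v)
    {x : Fin m → ℝ} (hx : x c = 0) : x ⬝ᵥ x ≤ x ⬝ᵥ (sLapMatrix G *ᵥ x) := by
  have hrow (i : Fin m) : x i ^ 2 + (if i = c then ∑ j, x j ^ 2 else 0) ≤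
      ∑ j, if G.Adj i j then (x i + x j) ^ 2 else 0 := by
    by_cases hi : i = c
    · subst hi
      rw [if_pos rfl, hx, zero_pow two_ne_zero, zero_add]
      refine le_of_eq (sum_congr rfl fun j _ => ?_)
      by_cases hj : j = i
      · simp [hj, hx]
      · simp [hc j hj]
    · rw [if_neg hi, add_zero]
      have := single_le_sum (f := fun j => if G.Adj i j then (x i + x j) ^ 2 else 0)
        (fun j _ => by positivity) (mem_univ c)
      simpa [(hc i hi).symm, hx] using this
  have := sum_le_sum (s := univ) fun i _ => hrow i
  rw [sum_add_distrib, sum_ite_eq' univ c, if_pos (mem_univ c)] at this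
  rw [dotProduct_sLapMatrix_mulVec, dotProduct]
  simp only [← sq]
  linarith

end SimpleGraph

section Sequences

variable {m : ℕ}

theorem IsEigSeq.sum_eq_trace {A : Matrix (Fin m) (Fin m) ℝ} {q : Fin m → ℝ}
    (hq : IsEigSeq A q) : ∑ i, q i = A.trace := by
  obtain ⟨-, hA, σ, hqσ⟩ := hq
  simp_rw [hqσ, Equiv.sum_comp σ hA.eigenvalues, hA.trace_eq_sum_eigenvalues,
    RCLike.ofReal_real_eq_id, id]

theorem IsEigSeq.pos {A : Matrix (Fin m) (Fin m) ℝ} {q : Fin m → ℝ} (hq : IsEigSeq A q)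
    (hA : A.PosDef) (i : Fin m) : 0 < q i := by
  obtain ⟨-, _, σ, hqσ⟩ := hq
  rw [hqσ]
  exact hA.eigenvalues_pos (σ i)

theorem IsEigSeq.eq_of_lt {A : Matrix (Fin m) (Fin m) ℝ} {q : Fin m → ℝ} (hq : IsEigSeq A q)
    {c : ℝ} (v : Fin m) (hform : ∀ x : Fin m → ℝ, x v = 0 → c * (x ⬝ᵥ x) ≤ x ⬝ᵥ (A *ᵥ x))
    {i j : Fin m} (hi : q i < c) (hj : q j < c) : i = j := by
  obtain ⟨-, hA, σ, hqσ⟩ := hq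
  rw [hqσ] at hi hj
  exact σ.injective (hA.eq_of_eigenvalues_lt v hform hi hj)

variable {G : SimpleGraph (Fin m)} [DecidableRel G.Adj] {d : Fin m → ℕ}

theorem IsDegSeq.sum_eq (hd : IsDegSeq G d) : ∑ i, (d i : ℝ) = ∑ v, (G.degree v : ℝ) := by
  obtain ⟨-, σ, hdσ⟩ := hd
  simp_rw [hdσ]
  exact Equiv.sum_comp σ fun v => (G.degree v : ℝ)

theorem IsDegSeq.val_lt_card {t : ℕ} (hd : IsDegSeq G d) {i : Fin m} (h : t ≤ d i) :
    i.val < #{v | t ≤ G.degree v} := by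
  obtain ⟨hanti, σ, hdσ⟩ := hd
  have hsub : (Iic i).map σ.toEmbedding ⊆ ({v | t ≤ G.degree v} : Finset _) := by
    intro v hv
    obtain ⟨j, hj, rfl⟩ := mem_map.1 hv
    simpa [← hdσ] using h.trans (hanti (mem_Iic.1 hj))
  have := card_le_card hsub
  rw [card_map, Fin.card_Iic] at this
  omega

end Sequences

section StarPlus

variable {n : ℕ}

theorem starPlus_degree_le_one {v : Fin n} (hv : 3 ≤ v.val) : (starPlus n).degree v ≤ 1 := by
  rw [← SimpleGraph.card_neighborFinset_eq_degree]
  refine (card_le_card (t := {⟨0, by omega⟩}) fun u hu => ?_).trans_eq (card_singleton _)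
  rw [SimpleGraph.mem_neighborFinset] at hu
  simp only [starPlus, ne_eq, Fin.ext_iff] at hu
  rw [mem_singleton, Fin.ext_iff]
  show u.val = 0
  omega

theorem card_two_le_degree_starPlus : #{v | 2 ≤ (starPlus n).degree v} ≤ 3 := by
  refine (card_le_card_of_injOn Fin.val (t := range 3) (fun v hv => ?_)
    Fin.val_injective.injOn).trans_eq (card_range 3)
  have := mt (starPlus_degree_le_one (v := v))
  simp only [coe_filter, mem_univ, true_and, Set.mem_ofPred_eq, coe_range, Set.mem_Iio] at hv ⊢
  omega

theorem IsDegSeq.starPlus_le_one {d : Fin n → ℕ} (hd : IsDegSeq (starPlus n) d) {i : Fin n}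
    (hi : 3 ≤ i.val) : d i ≤ 1 := by
  by_contra! h
  have := hd.val_lt_card (t := 2) h
  have := card_two_le_degree_starPlus (n := n)
  omega

theorem posDef_sLapMatrix_starPlus (hn : 3 ≤ n) : (sLapMatrix (starPlus n)).PosDef := by
  refine (starPlus n).posDef_sLapMatrix fun x hx => ?_
  have h01 := hx ⟨0, by omega⟩ ⟨1, by omega⟩ ⟨by simp [Fin.ext_iff], by simp⟩
  have h02 := hx ⟨0, by omega⟩ ⟨2, by omega⟩ ⟨by simp [Fin.ext_iff], by simp⟩
  have h12 := hx ⟨1, by omega⟩ ⟨2, by omega⟩ ⟨by simp [Fin.ext_iff], by simp⟩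
  have hx0 : x ⟨0, by omega⟩ = 0 := by linarith
  funext v
  by_cases hv : v.val = 0
  · rw [show v = ⟨0, by omega⟩ from Fin.ext hv, hx0, Pi.zero_apply]
  · have := hx ⟨0, by omega⟩ v ⟨by simp [Fin.ext_iff]; omega, by simp⟩
    simpa [hx0] using this

theorem dotProduct_self_le_dotProduct_sLapMatrix_starPlus_mulVec (hn : 0 < n)
    {x : Fin n → ℝ} (hx : x ⟨0, hn⟩ = 0) : x ⬝ᵥ x ≤ x ⬝ᵥ (sLapMatrix (starPlus n) *ᵥ x) :=
  (starPlus n).dotProduct_self_le_dotProduct_sLapMatrix_mulVec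
    (fun _ hv => ⟨Ne.symm hv, Or.inl rfl⟩) hx

end StarPlus

theorem starPlus_sum_k_largest_lt {n : ℕ} (hn : 4 ≤ n) (k : ℕ) (hk3 : 3 ≤ k)
    (q : Fin n → ℝ) (hq : IsEigSeq (sLapMatrix (starPlus n)) q)
    (d : Fin n → ℕ) (hd : IsDegSeq (starPlus n) d) :
    ∑ i ∈ Finset.univ.filter (fun i : Fin n => i.val < k), q i <
      1 + ∑ i ∈ Finset.univ.filter (fun i : Fin n => i.val < k), (d i : ℝ) := by
  set T : Finset (Fin n) := {i | ¬ i.val < k}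
  have hsum : ∑ i, q i = ∑ i, (d i : ℝ) := by
    rw [hq.sum_eq_trace, SimpleGraph.trace_sLapMatrix, hd.sum_eq]
  have hq_tail : (#T : ℝ) - 1 < ∑ i ∈ T, q i :=
    card_sub_one_lt_sum T (fun i _ => hq.pos (posDef_sLapMatrix_starPlus (by omega)) i)
      fun i _ j _ => hq.eq_of_lt ⟨0, by omega⟩ fun x hx => by
        rw [one_mul]
        exact dotProduct_self_le_dotProduct_sLapMatrix_starPlus_mulVec (by omega) hx
  have hd_tail : ∑ i ∈ T, (d i : ℝ) ≤ #T := by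
    simpa using sum_le_card_nsmul T (fun i => (d i : ℝ)) 1 fun i hi => by
      exact_mod_cast hd.starPlus_le_one (by simp only [T, mem_filter] at hi; omega)
  rw [← sum_filter_add_sum_filter_not univ (fun i : Fin n => i.val < k),
    ← sum_filter_add_sum_filter_not univ (fun i : Fin n => i.val < k) (fun i => (d i : ℝ))] at hsum
  linarith
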